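/- The Jacobian algebra ℂ[x,y,z]/(4x^3 + z^2, y^2, xz) admits a ℂ-basis consisting of the residue classes of the 10 monomials 1, x, x^2, y, xy, x^2y, z, yz, x^3, x^3y. -/

import Mathlib

open MvPolynomial

noncomputable section

abbrev R3 : Type := MvPolynomial (Fin 3) ℂ

/-- The Jacobian ideal of the `Q₁₀` polynomial `x⁴ + y³ + xz²`
(with harmless scalar factors removed): `4x³ + z²`, `y²`, `xz`. -/
def J2 : Ideal R3 := Ideal.span {4 * X 0 ^ 3 + X 2 ^ 2, X 1 ^ 2, X 0 * X 2}

/-- The ten monomials `1, x, x², y, xy, x²y, z, yz, x³, x³y`. -/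
def ms2 : Fin 10 → R3 :=
  ![1, X 0, X 0 ^ 2, X 1, X 0 * X 1, X 0 ^ 2 * X 1, X 2, X 1 * X 2,
    X 0 ^ 3, X 0 ^ 3 * X 1]

/-!
Spanning: modulo `J2` we have `y² = 0`, `xz = 0`, `z² = -4x³`, and hence
`4x⁴ = x(4x³ + z²) - z·xz = 0`; these rewrite every monomial to `0` or to a multiple of one of the
ten monomials.

Independence: the quotient is Gorenstein with socle spanned by `x³y`. The functional
`ℓ = coeff_{x³y} - 4 coeff_{yz²}` vanishes on `J2`, and each of the ten monomials `m` has a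
complementary monomial `m'` with `ℓ(m' m) ≠ 0` but `ℓ(m' n) = 0` for the other nine `n`. Applying
`p ↦ ℓ(m' p)` to a vanishing linear combination kills every coefficient but that of `m`.
-/

theorem map_mul_eq_zero_of_mem_span {R M F : Type*} [CommSemiring R] [AddCommMonoid M]
    [FunLike F R M] [AddMonoidHomClass F R M] (f : F) {s : Set R}
    (hs : ∀ g ∈ s, ∀ q, f (q * g) = 0) {p : R} (hp : p ∈ Ideal.span s) (q : R) :
    f (q * p) = 0 := by
  induction hp using Submodule.span_induction generalizing q with
  | mem g hg => exact hs g hg q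
  | zero => rw [mul_zero, map_zero]
  | add a b _ _ ha hb => rw [mul_add, map_add, ha, hb, add_zero]
  | smul r a _ ha => rw [smul_eq_mul, ← mul_assoc, ha]

section MonomialOfFun

variable {σ R : Type*} [CommSemiring R]

def monomialOfFun [Finite σ] (e : σ → ℕ) : MvPolynomial σ R :=
  monomial (Finsupp.equivFunOnFinite.symm e) 1

theorem monomialOfFun_mul [Finite σ] (e f : σ → ℕ) :
    (monomialOfFun e * monomialOfFun f : MvPolynomial σ R) = monomialOfFun (e + f) := by
  rw [monomialOfFun, monomialOfFun, monomialOfFun, monomial_mul, mul_one]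
  congr
  exact Finsupp.ext fun _ => rfl

theorem coeff_mul_monomialOfFun [Fintype σ] (q : MvPolynomial σ R) (e g : σ → ℕ) :
    coeff (Finsupp.equivFunOnFinite.symm e) (q * monomialOfFun g) =
      if ∀ i, g i ≤ e i then coeff (Finsupp.equivFunOnFinite.symm (e - g)) q else 0 := by
  rw [monomialOfFun, coeff_mul_monomial', mul_one]
  simp only [Finsupp.le_def, Finsupp.coe_equivFunOnFinite_symm]
  congr
  exact Finsupp.ext fun _ => rfl

theorem monomial_one_eq_X_pow_mul (u : Fin 3 →₀ ℕ) :
    (monomial u 1 : MvPolynomial (Fin 3) R) = X 0 ^ u 0 * X 1 ^ u 1 * X 2 ^ u 2 := by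
  rw [monomial_eq, C_1, one_mul, Finsupp.prod_fintype _ _ fun _ => pow_zero _,
    Fin.prod_univ_three]

theorem monomialOfFun_fin_three (e : Fin 3 → ℕ) :
    (monomialOfFun e : MvPolynomial (Fin 3) R) = X 0 ^ e 0 * X 1 ^ e 1 * X 2 ^ e 2 :=
  monomial_one_eq_X_pow_mul _

end MonomialOfFun

theorem J2_eq_span_monomialOfFun :
    J2 = Ideal.span {(4 : ℂ) • monomialOfFun ![3, 0, 0] + monomialOfFun ![0, 0, 2],
      monomialOfFun ![0, 2, 0], monomialOfFun ![1, 0, 1]} := by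
  simp [J2, monomialOfFun_fin_three, smul_eq_C_mul, map_ofNat]

/-- The coefficient of the socle generator `x³y` in the normal form: `yz² ≡ -4x³y` is the only
other monomial with a nonzero multiple of `x³y` as its normal form. -/
def socleCoeff : R3 →ₗ[ℂ] ℂ :=
  lcoeff ℂ (Finsupp.equivFunOnFinite.symm ![3, 1, 0]) -
    4 • lcoeff ℂ (Finsupp.equivFunOnFinite.symm ![0, 1, 2])

theorem socleCoeff_monomialOfFun (e : Fin 3 → ℕ) :
    socleCoeff (monomialOfFun e) =
      (if e = ![3, 1, 0] then 1 else 0) - 4 * (if e = ![0, 1, 2] then 1 else 0) := by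
  simp [socleCoeff, monomialOfFun, coeff_monomial]

theorem socleCoeff_monomialOfFun_ne_zero {e : Fin 3 → ℕ} (he : e = ![3, 1, 0] ∨ e = ![0, 1, 2]) :
    socleCoeff (monomialOfFun e) ≠ 0 := by
  rcases he with rfl | rfl <;> norm_num [socleCoeff_monomialOfFun]

theorem socleCoeff_mul_eq_zero_of_mem_J2 {p : R3} (hp : p ∈ J2) (q : R3) :
    socleCoeff (q * p) = 0 := by
  rw [J2_eq_span_monomialOfFun] at hp
  refine map_mul_eq_zero_of_mem_span socleCoeff ?_ hp q
  simp only [Set.mem_insert_iff, Set.mem_singleton_iff, forall_eq_or_imp, forall_eq]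
  refine ⟨fun q => ?_, fun q => ?_, fun q => ?_⟩ <;>
    simp [socleCoeff, mul_add, coeff_mul_monomialOfFun, Fin.forall_fin_succ]

def ms2Exp : Fin 10 → Fin 3 → ℕ :=
  ![![0, 0, 0], ![1, 0, 0], ![2, 0, 0], ![0, 1, 0], ![1, 1, 0], ![2, 1, 0], ![0, 0, 1], ![0, 1, 1],
    ![3, 0, 0], ![3, 1, 0]]

def socleDualExp : Fin 10 → Fin 3 → ℕ :=
  ![![3, 1, 0], ![2, 1, 0], ![1, 1, 0], ![3, 0, 0], ![2, 0, 0], ![1, 0, 0], ![0, 1, 1], ![0, 0, 1],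
    ![0, 1, 0], ![0, 0, 0]]

theorem ms2_eq_monomialOfFun (i : Fin 10) : ms2 i = monomialOfFun (ms2Exp i) := by
  fin_cases i <;> simp [ms2, ms2Exp, monomialOfFun_fin_three]

theorem socleDualExp_add_ms2Exp_self (j : Fin 10) :
    socleDualExp j + ms2Exp j = ![3, 1, 0] ∨ socleDualExp j + ms2Exp j = ![0, 1, 2] := by
  revert j
  decide

theorem socleDualExp_add_ms2Exp_of_ne {i j : Fin 10} (h : i ≠ j) :
    socleDualExp j + ms2Exp i ≠ ![3, 1, 0] ∧ socleDualExp j + ms2Exp i ≠ ![0, 1, 2] := by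
  revert i j
  decide

theorem linearIndependent_mk_ms2 :
    LinearIndependent ℂ fun i => Ideal.Quotient.mk J2 (ms2 i) := by
  rw [Fintype.linearIndependent_iff]
  intro c hc j
  have hmem : ∑ i, c i • ms2 i ∈ J2 := by
    rw [← Ideal.Quotient.eq_zero_iff_mem, ← hc, ← Ideal.Quotient.mkₐ_eq_mk ℂ]
    simp only [map_sum, map_smul]
  have h := socleCoeff_mul_eq_zero_of_mem_J2 hmem (monomialOfFun (socleDualExp j))
  rw [Finset.mul_sum, map_sum, Finset.sum_eq_single j] at h
  · rw [mul_smul_comm, map_smul, smul_eq_mul, ms2_eq_monomialOfFun, monomialOfFun_mul] at h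
    exact (mul_eq_zero.mp h).resolve_right
      (socleCoeff_monomialOfFun_ne_zero (socleDualExp_add_ms2Exp_self j))
  · intro i _ hij
    obtain ⟨h1, h2⟩ := socleDualExp_add_ms2Exp_of_ne hij
    simp [ms2_eq_monomialOfFun, monomialOfFun_mul, socleCoeff_monomialOfFun, h1, h2]
  · simp

section Spanning

local notation "𝔵" => Ideal.Quotient.mk J2 (X 0)
local notation "𝔶" => Ideal.Quotient.mk J2 (X 1)
local notation "𝔷" => Ideal.Quotient.mk J2 (X 2)
local notation "𝒮" => Submodule.span ℂ (Set.range fun i => Ideal.Quotient.mk J2 (ms2 i))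

theorem mk_eq_zero_of_mem_J2_gens {p : R3}
    (hp : p ∈ ({4 * X 0 ^ 3 + X 2 ^ 2, X 1 ^ 2, X 0 * X 2} : Set R3)) :
    Ideal.Quotient.mk J2 p = 0 :=
  Ideal.Quotient.eq_zero_iff_mem.mpr (Ideal.subset_span hp)

theorem mk_X1_sq : 𝔶 ^ 2 = 0 := by
  rw [← map_pow]
  exact mk_eq_zero_of_mem_J2_gens (by simp)

theorem mk_X0_mul_X2 : 𝔵 * 𝔷 = 0 := by
  rw [← map_mul]
  exact mk_eq_zero_of_mem_J2_gens (by simp)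

theorem mk_X2_sq : 𝔷 ^ 2 = -4 * 𝔵 ^ 3 := by
  have h := mk_eq_zero_of_mem_J2_gens (p := 4 * X 0 ^ 3 + X 2 ^ 2) (by simp)
  simp only [map_add, map_mul, map_pow, map_ofNat] at h
  linear_combination h

theorem mk_X0_pow_four : 𝔵 ^ 4 = 0 := by
  have h4 : IsUnit (4 : R3 ⧸ J2) := by
    simpa only [map_ofNat] using
      (isUnit_iff_ne_zero.mpr (by norm_num : (4 : ℂ) ≠ 0)).map (algebraMap ℂ (R3 ⧸ J2))
  refine h4.mul_right_eq_zero.mp ?_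
  linear_combination 𝔵 * mk_X2_sq - 𝔷 * mk_X0_mul_X2

theorem mem_span_of_mk_ms2_eq (j : Fin 10) {v : R3 ⧸ J2}
    (h : Ideal.Quotient.mk J2 (ms2 j) = v) : v ∈ 𝒮 :=
  h ▸ Submodule.subset_span ⟨j, rfl⟩

theorem pow_mul_pow_mem_span : ∀ a b : ℕ, 𝔵 ^ a * 𝔶 ^ b ∈ 𝒮
  | _, b + 2 => by rw [pow_add, mk_X1_sq, mul_zero, mul_zero]; exact zero_mem _
  | a + 4, _ => by rw [pow_add, mk_X0_pow_four, mul_zero, zero_mul]; exact zero_mem _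
  | 0, 0 => mem_span_of_mk_ms2_eq 0 (by simp [ms2])
  | 1, 0 => mem_span_of_mk_ms2_eq 1 (by simp [ms2])
  | 2, 0 => mem_span_of_mk_ms2_eq 2 (by simp [ms2])
  | 3, 0 => mem_span_of_mk_ms2_eq 8 (by simp [ms2])
  | 0, 1 => mem_span_of_mk_ms2_eq 3 (by simp [ms2])
  | 1, 1 => mem_span_of_mk_ms2_eq 4 (by simp [ms2])
  | 2, 1 => mem_span_of_mk_ms2_eq 5 (by simp [ms2])
  | 3, 1 => mem_span_of_mk_ms2_eq 9 (by simp [ms2])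

theorem pow_mul_X2_mem_span : ∀ b : ℕ, 𝔶 ^ b * 𝔷 ∈ 𝒮
  | b + 2 => by rw [pow_add, mk_X1_sq, mul_zero, zero_mul]; exact zero_mem _
  | 0 => mem_span_of_mk_ms2_eq 6 (by simp [ms2])
  | 1 => mem_span_of_mk_ms2_eq 7 (by simp [ms2])

theorem pow_mul_pow_mul_pow_mem_span : ∀ a b c : ℕ, 𝔵 ^ a * 𝔶 ^ b * 𝔷 ^ c ∈ 𝒮
  | a, b, 0 => by simpa using pow_mul_pow_mem_span a b
  | 0, b, 1 => by simpa using pow_mul_X2_mem_span b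
  | a + 1, b, 1 => by
    rw [show 𝔵 ^ (a + 1) * 𝔶 ^ b * 𝔷 ^ 1 = 𝔵 ^ a * 𝔶 ^ b * (𝔵 * 𝔷) by ring, mk_X0_mul_X2,
      mul_zero]
    exact zero_mem _
  | a, b, c + 2 => by
    rw [show 𝔵 ^ a * 𝔶 ^ b * 𝔷 ^ (c + 2) = -(4 • (𝔵 ^ (a + 3) * 𝔶 ^ b * 𝔷 ^ c)) by
      rw [nsmul_eq_mul]; linear_combination 𝔵 ^ a * 𝔶 ^ b * 𝔷 ^ c * mk_X2_sq]
    exact neg_mem (nsmul_mem (pow_mul_pow_mul_pow_mem_span (a + 3) b c) 4)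

theorem mk_mem_span (p : R3) : Ideal.Quotient.mk J2 p ∈ 𝒮 := by
  induction p using MvPolynomial.induction_on' with
  | monomial u a =>
    rw [← mul_one a, ← smul_eq_mul, ← smul_monomial, ← Ideal.Quotient.mkₐ_eq_mk ℂ, map_smul,
      monomial_one_eq_X_pow_mul]
    simpa using Submodule.smul_mem _ a (pow_mul_pow_mul_pow_mem_span (u 0) (u 1) (u 2))
  | add p q hp hq => rw [map_add]; exact add_mem hp hq

end Spanning

/-- The residue classes of the ten monomials `1, x, x², y, xy, x²y, z, yz, x³,
x³y` form a `ℂ`-basis of `ℂ[x,y,z]/(4x³ + z², y², xz)`. -/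
theorem stmt2 :
    ∃ b : Module.Basis (Fin 10) ℂ (R3 ⧸ J2),
      ∀ i, b i = Ideal.Quotient.mk J2 (ms2 i) := by
  refine ⟨Module.Basis.mk linearIndependent_mk_ms2 fun q _ => ?_, Module.Basis.mk_apply _ _⟩
  obtain ⟨p, rfl⟩ := Ideal.Quotient.mk_surjective q
  exact mk_mem_span p

end
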